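/- For every k ≥ 1, every finite sequence of integers b_1, …, b_k all ≥ 2, and every g ∈ C¹(S¹) with ∫ g dx = 0, one has ‖T̂*_{b_1} ⋯ T̂*_{b_k} g‖ ≤ 2 · 2^{−k} ‖g‖, where ‖h‖ := sup|h| + sup|h'|. -/

import Mathlib

/-!
Setting: the circle `S¹ = ℝ/ℤ` with Lebesgue (Haar) probability measure, realized as
`1`-periodic functions on `ℝ` together with Lebesgue measure restricted to `(0, 1]`.
For an integer `b ≥ 2`, the map `T_b x = bx (mod 1)` lifts to `x ↦ b * x` on `ℝ`, and its
Perron–Frobenius operator (the `L²`-adjoint of the Koopman operator `g ↦ g ∘ T_b`) is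
`(T̂*_b g)(x) = (1/b) ∑_{j<b} g((x+j)/b)`.
-/

open MeasureTheory ProbabilityTheory Filter Function
open scoped ENNReal Topology

/-- The Lebesgue (Haar) probability measure of the circle, realized on `(0, 1] ⊆ ℝ`. -/
noncomputable def circleMeasure : Measure ℝ := volume.restrict (Set.Ioc 0 1)

/-- The Perron–Frobenius operator of `T_b x = bx (mod 1)`, acting on (`1`-periodic)
functions on `ℝ`: `(T̂*_b g)(x) = (1/b) ∑_{j<b} g((x+j)/b)`. -/
noncomputable def PFc (b : ℕ) (g : ℝ → ℝ) : ℝ → ℝ :=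
  fun x => (1 / (b : ℝ)) * ∑ j ∈ Finset.range b, g ((x + j) / b)

/-- `T̂*_{b_1} ⋯ T̂*_{b_k} g` for a finite sequence `[b_1, …, b_k]`. -/
noncomputable def PFcList (l : List ℕ) (g : ℝ → ℝ) : ℝ → ℝ := l.foldr PFc g

/-- `PFcSeg a i j = T̂*_{[i..j]} = T̂*_{a_j} ⋯ T̂*_{a_i}` for `i ≤ j`, the identity otherwise. -/
noncomputable def PFcSeg (a : ℕ → ℕ) (i : ℕ) : ℕ → (ℝ → ℝ) → (ℝ → ℝ)
  | 0 => id
  | j + 1 => if i ≤ j + 1 then fun g => PFc (a (j + 1)) (PFcSeg a i j g) else id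

/-- `u_k = ∑_{i=1}^k T̂*_{[i+1..k]} f`. -/
noncomputable def uc (a : ℕ → ℕ) (f : ℝ → ℝ) (k : ℕ) : ℝ → ℝ :=
  fun x => ∑ i ∈ Finset.Icc 1 k, PFcSeg a (i + 1) k f x

/-- `T_{[k]} = T_{a_k} ∘ ⋯ ∘ T_{a_1}` is multiplication (mod 1) by `∏_{i=1}^k a_i`. -/
def prodA (a : ℕ → ℕ) (k : ℕ) : ℕ := ∏ i ∈ Finset.Icc 1 k, a i

/-- The Birkhoff-like sums `S_n = ∑_{k=1}^n f ∘ T_{[k]}`, for a `1`-periodic `f`. -/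
noncomputable def Sc (a : ℕ → ℕ) (f : ℝ → ℝ) (n : ℕ) : ℝ → ℝ :=
  fun x => ∑ k ∈ Finset.Icc 1 n, f ((prodA a k : ℝ) * x)

/-- The `C¹`-norm `‖g‖ = sup|g| + sup|g'|`. -/
noncomputable def Cnorm (g : ℝ → ℝ) : ℝ := (⨆ x : ℝ, |g x|) + ⨆ x : ℝ, |deriv g x|

/-- The pullback σ-algebra `T_b^{-1}(Borel)` on the circle, realized on `ℝ` as the σ-algebra
generated by the lift `x ↦ fract (b * x)` of `T_b`. -/
noncomputable def circleSigma (b : ℕ) : MeasurableSpace ℝ :=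
  MeasurableSpace.comap (fun x => Int.fract ((b : ℝ) * x)) Real.measurableSpace

/-- `cos²χ_k = ‖E[u_k | T_{a_{k+1}}^{-1}(Borel)]‖²_{L²} / ‖u_k‖²_{L²}` (`= 0` when `u_k = 0`,
by the convention `c / 0 = 0`). -/
noncomputable def cos2c (a : ℕ → ℕ) (f : ℝ → ℝ) (k : ℕ) : ℝ :=
  (∫ x, ((circleMeasure[uc a f k|circleSigma (a (k + 1))]) x) ^ 2 ∂circleMeasure) /
    ∫ x, (uc a f k x) ^ 2 ∂circleMeasure

/-!
Each `T̂*_b` averages `b` copies of `g` contracted by the factor `b`, so it divides the bound on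
the derivative by `b ≥ 2` while preserving periodicity and the mean. A `1`-periodic function `h`
with zero mean and `|h'| ≤ K` satisfies `|h| ≤ K`, because `h x = ∫_x^{x+1} (h x - h t) dt`;
hence at the end the sup of `|h|` is controlled by the sup of `|h'|`, and both are at most
`2^{-k} sup|g'|`.
-/

namespace Function.Periodic

theorem deriv {f : ℝ → ℝ} {T : ℝ} (hf : Periodic f T) : Periodic (_root_.deriv f) T := by
  intro x
  simpa only [hf _] using (deriv_comp_add_const f T x).symm

theorem abs_le_of_intervalIntegral_eq_zero {f : ℝ → ℝ} {T K : ℝ} (hf : Periodic f T)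
    (hT : 0 < T) (hd : Differentiable ℝ f) (hmean : ∫ t in (0 : ℝ)..T, f t = 0)
    (hK : ∀ x, |_root_.deriv f x| ≤ K) (x : ℝ) : |f x| ≤ K * T := by
  have hlip : ∀ t ∈ Set.uIoc x (x + T), ‖f x - f t‖ ≤ K * T := by
    intro t ht
    rw [Set.uIoc_of_le (by linarith)] at ht
    calc ‖f x - f t‖ ≤ K * ‖x - t‖ :=
          convex_univ.norm_image_sub_le_of_norm_deriv_le (fun y _ => hd y) (fun y _ => hK y)
            (Set.mem_univ t) (Set.mem_univ x)
      _ ≤ K * T := by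
          gcongr
          · exact (abs_nonneg _).trans (hK 0)
          · rw [Real.norm_eq_abs, abs_sub_comm, abs_of_pos (by linarith [ht.1])]
            linarith [ht.2]
  have hrepr : ∫ t in x..x + T, (f x - f t) = T * f x := by
    rw [intervalIntegral.integral_sub intervalIntegrable_const
        (hd.continuous.intervalIntegrable _ _), intervalIntegral.integral_const,
      hf.intervalIntegral_add_eq x 0, zero_add, hmean]
    simp
  have := intervalIntegral.norm_integral_le_of_norm_le_const hlip
  rw [hrepr, Real.norm_eq_abs, abs_mul, add_sub_cancel_left, abs_of_pos hT] at this
  exact le_of_mul_le_mul_left (by linarith) hT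

end Function.Periodic

section PFc

variable {g : ℝ → ℝ} (b : ℕ)

theorem hasDerivAt_PFc (hg : Differentiable ℝ g) (x : ℝ) :
    HasDerivAt (PFc b g) (PFc b (deriv g) x / b) x := by
  have hterm : ∀ j ∈ Finset.range b,
      HasDerivAt (fun y => g ((y + j) / b)) (deriv g ((x + j) / b) * (1 / b)) x := fun j _ =>
    (hg _).hasDerivAt.comp x (((hasDerivAt_id x).add_const _).div_const _ |>.congr_deriv
      (by simp))
  refine ((HasDerivAt.fun_sum hterm).const_mul (1 / (b : ℝ))).congr_deriv ?_
  simp only [PFc, ← Finset.sum_mul]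
  ring

theorem differentiable_PFc (hg : Differentiable ℝ g) : Differentiable ℝ (PFc b g) :=
  fun x => (hasDerivAt_PFc b hg x).differentiableAt

theorem continuous_PFc (hg : Continuous g) : Continuous (PFc b g) := by
  unfold PFc
  fun_prop

theorem periodic_PFc (hg : Periodic g 1) : Periodic (PFc b g) 1 := by
  intro x
  set f : ℕ → ℝ := fun j => g ((x + j) / b)
  have hshift : ∑ j ∈ Finset.range b, g ((x + 1 + j) / b) = ∑ j ∈ Finset.range b, f (j + 1) :=
    Finset.sum_congr rfl fun j _ => by simp only [f]; push_cast; ring_nf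
  have hwrap : f b = f 0 := by
    rcases eq_or_ne b 0 with rfl | hb
    · rfl
    · simp only [f, Nat.cast_zero, add_zero]
      rw [add_div, div_self (Nat.cast_ne_zero.mpr hb), hg]
  have := Finset.sum_range_succ' f b
  rw [Finset.sum_range_succ, hwrap, add_left_inj] at this
  rw [PFc, PFc, hshift, ← this]

theorem abs_PFc_le {M : ℝ} (hM : ∀ x, |g x| ≤ M) (x : ℝ) : |PFc b g x| ≤ M := by
  rcases eq_or_ne b 0 with rfl | hb
  · simpa [PFc] using (abs_nonneg _).trans (hM 0)
  have hb' : (0 : ℝ) < b := by positivity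
  calc |PFc b g x| ≤ 1 / b * ∑ j ∈ Finset.range b, |g ((x + j) / b)| := by
        rw [PFc, abs_mul, abs_of_pos (by positivity)]
        gcongr
        exact Finset.abs_sum_le_sum_abs _ _
    _ ≤ 1 / b * ∑ _j ∈ Finset.range b, M := by gcongr; exact hM _
    _ = M := by simp [field]

theorem abs_deriv_PFc_le (hg : Differentiable ℝ g) {M : ℝ} (hM : ∀ x, |deriv g x| ≤ M)
    (x : ℝ) : |deriv (PFc b g) x| ≤ M / b := by
  rw [(hasDerivAt_PFc b hg x).deriv, abs_div, Nat.abs_cast]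
  gcongr
  exact abs_PFc_le b hM x

theorem integral_PFc (hg : Continuous g) (hb : b ≠ 0) :
    ∫ x in (0 : ℝ)..1, PFc b g x = ∫ x in (0 : ℝ)..1, g x := by
  have hpiece : ∀ j : ℕ, (1 / b : ℝ) * ∫ x in (0 : ℝ)..1, g ((x + j) / b)
      = ∫ x in (j / b : ℝ)..(j + 1 : ℕ) / b, g x := by
    intro j
    simp only [add_div, one_div, ← smul_eq_mul, intervalIntegral.inv_smul_integral_comp_div_add]
    push_cast
    ring_nf
  have hadj := intervalIntegral.sum_integral_adjacent_intervals (μ := volume)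
    (a := fun j : ℕ => (j / b : ℝ)) (n := b) fun k _ => hg.intervalIntegrable _ _
  simp only [Nat.cast_zero, zero_div, div_self (Nat.cast_ne_zero.mpr hb : (b : ℝ) ≠ 0)] at hadj
  rw [← hadj, ← Finset.sum_congr rfl fun j _ => hpiece j, ← Finset.mul_sum]
  unfold PFc
  rw [intervalIntegral.integral_const_mul, intervalIntegral.integral_finsetSum]
  exact fun j _ => (hg.comp (by fun_prop)).intervalIntegrable _ _

end PFc

section PFcList

variable {g : ℝ → ℝ} (l : List ℕ)

theorem differentiable_PFcList (hg : Differentiable ℝ g) : Differentiable ℝ (PFcList l g) := by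
  induction l with
  | nil => exact hg
  | cons b l ih => exact differentiable_PFc b ih

theorem continuous_PFcList (hg : Continuous g) : Continuous (PFcList l g) := by
  induction l with
  | nil => exact hg
  | cons b l ih => exact continuous_PFc b ih

theorem periodic_PFcList (hg : Periodic g 1) : Periodic (PFcList l g) 1 := by
  induction l with
  | nil => exact hg
  | cons b l ih => exact periodic_PFc b ih

theorem integral_PFcList (hl : ∀ b ∈ l, b ≠ 0) (hg : Continuous g) :
    ∫ x in (0 : ℝ)..1, PFcList l g x = ∫ x in (0 : ℝ)..1, g x := by
  induction l with
  | nil => rfl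
  | cons b l ih =>
    rw [← ih fun c hc => hl c (List.mem_cons_of_mem b hc)]
    exact integral_PFc b (continuous_PFcList l hg) (hl b List.mem_cons_self)

theorem abs_deriv_PFcList_le (hl : ∀ b ∈ l, 2 ≤ b) (hg : Differentiable ℝ g) {L : ℝ}
    (hL : ∀ x, |deriv g x| ≤ L) (x : ℝ) : |deriv (PFcList l g) x| ≤ 2⁻¹ ^ l.length * L := by
  induction l generalizing x with
  | nil => simpa [PFcList] using hL x
  | cons b l ih =>
    have hL0 : 0 ≤ L := (abs_nonneg _).trans (hL 0)
    have hb : (2 : ℝ) ≤ b := by exact_mod_cast hl b List.mem_cons_self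
    calc |deriv (PFc b (PFcList l g)) x| ≤ 2⁻¹ ^ l.length * L / b :=
          abs_deriv_PFc_le b (differentiable_PFcList l hg)
            (ih fun c hc => hl c (List.mem_cons_of_mem b hc)) x
      _ ≤ 2⁻¹ ^ l.length * L / 2 := by gcongr
      _ = 2⁻¹ ^ (b :: l).length * L := by rw [List.length_cons, pow_succ]; ring

end PFcList

theorem PF_contraction_list
    (l : List ℕ) (hl2 : ∀ b ∈ l, 2 ≤ b)
    (g : ℝ → ℝ) (hg_per : Periodic g 1) (hg_C1 : ContDiff ℝ 1 g)
    (hg_mean : ∫ x in Set.Ioc (0 : ℝ) 1, g x = 0) :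
    Cnorm (PFcList l g) ≤ 2 * (2 : ℝ)⁻¹ ^ l.length * Cnorm g := by
  have hd : Differentiable ℝ g := hg_C1.differentiable one_ne_zero
  have hbdd : BddAbove (Set.range fun x => |deriv g x|) :=
    ((hg_per.deriv.comp abs).isBounded_of_continuous one_ne_zero
      (hg_C1.continuous_deriv le_rfl).abs).bddAbove
  set L := ⨆ x, |deriv g x|
  set c : ℝ := 2⁻¹ ^ l.length
  have hder : ∀ x, |deriv (PFcList l g) x| ≤ c * L :=
    abs_deriv_PFcList_le l hl2 hd (le_ciSup hbdd)
  have hmean : ∫ x in (0 : ℝ)..1, PFcList l g x = 0 := by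
    rw [integral_PFcList l (fun b hb => Nat.ne_zero_of_lt (hl2 b hb)) hd.continuous,
      intervalIntegral.integral_of_le zero_le_one, hg_mean]
  have hval : ∀ x, |PFcList l g x| ≤ c * L := by
    simpa using (periodic_PFcList l hg_per).abs_le_of_intervalIntegral_eq_zero one_pos
      (differentiable_PFcList l hd) hmean hder
  have hLC : L ≤ Cnorm g := le_add_of_nonneg_left (Real.iSup_nonneg fun x => abs_nonneg _)
  calc Cnorm (PFcList l g) ≤ c * L + c * L := add_le_add (ciSup_le hval) (ciSup_le hder)
    _ = 2 * c * L := by ring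
    _ ≤ 2 * c * Cnorm g := by gcongr
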